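/- Let p ≥ 2 be an integer. If χ < C_p and α ≤ 0, then F^p_{m,α} has no critical point in R^p. -/

import Mathlib

open scoped BigOperators
noncomputable section

/-- Internal (diffusion) part: sum of (X_{i+1} - X_i)^(1-m) over consecutive gaps. -/
def gapSum (m : ℝ) (p : ℕ) (X : EuclideanSpace ℝ (Fin p)) : ℝ :=
  ∑ i : Fin p, if h : (i : ℕ) + 1 < p then (X ⟨(i : ℕ) + 1, h⟩ - X i) ^ (1 - m) else 0

/-- Interaction part: sum of |X_i - X_j|^(1-m) over ordered pairs i ≠ j. -/
def pairSum (m : ℝ) (p : ℕ) (X : EuclideanSpace ℝ (Fin p)) : ℝ :=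
  ∑ i : Fin p, ∑ j : Fin p, if i ≠ j then |X i - X j| ^ (1 - m) else 0

/-- The discrete free energy F^p_m. -/
def FF (m χ : ℝ) (p : ℕ) (X : EuclideanSpace ℝ (Fin p)) : ℝ :=
  (m - 1)⁻¹ * gapSum m p X - (χ / (m - 1)) * pairSum m p X

/-- Membership in R^p: strictly increasing with zero mean. -/
def memR (p : ℕ) (X : EuclideanSpace ℝ (Fin p)) : Prop :=
  (StrictMono fun i => X i) ∧ ∑ i, X i = 0

/-- The critical constant C_p, with 1/C_p the sup of the HLS ratio. -/
def Cp (m : ℝ) (p : ℕ) : ℝ :=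
  (sSup {r : ℝ | ∃ X : EuclideanSpace ℝ (Fin p), memR p X ∧
    r = pairSum m p X / gapSum m p X})⁻¹

/-- The functional F^p_{m,α} with confining quadratic potential. -/
def FFa (m χ α : ℝ) (p : ℕ) (X : EuclideanSpace ℝ (Fin p)) : ℝ :=
  FF m χ p X + α / 2 * ‖X‖ ^ 2

/-- H^N_{m+1}(Y) = |∇F^N_m(Y)|² − ((m−1) F^N_m(Y))². -/
def Hfun (m χ : ℝ) (N : ℕ) (Y : EuclideanSpace ℝ (Fin N)) : ℝ :=
  ‖gradient (FF m χ N) Y‖ ^ 2 - ((m - 1) * FF m χ N Y) ^ 2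

/-- X : [0,T) → R^N is a solution of the gradient flow of F^N_m. -/
def isGFlow (m χ : ℝ) (N : ℕ) (T : ℝ) (X : ℝ → EuclideanSpace ℝ (Fin N)) : Prop :=
  ∀ t ∈ Set.Ico (0 : ℝ) T, memR N (X t) ∧
    HasDerivWithinAt X (-(gradient (FF m χ N) (X t))) (Set.Ico (0 : ℝ) T) t

/-- The gap Y_{i+1} - Y_i (0 if i+1 is out of range). -/
def gapAt (N : ℕ) (Y : EuclideanSpace ℝ (Fin N)) (i : ℕ) : ℝ :=
  if h : i + 1 < N then Y ⟨i + 1, h⟩ - Y ⟨i, Nat.lt_of_succ_lt h⟩ else 0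

/-!
F^p_m is positively homogeneous of degree 1 - m and |X|² of degree 2, so differentiating
t ↦ F^p_{m,α}(t V) at t = 1 (Euler's identity) gives, at a critical point V,
0 = (1 - m) F^p_m(V) + α |V|².
When χ < C_p the definition of C_p yields χ Σ_{i≠j} |V_i - V_j|^{1-m} < Σ_i (V_{i+1} - V_i)^{1-m},
i.e. F^p_m(V) > 0, so the right-hand side is negative for α ≤ 0.
-/

theorem HasFDerivAt.apply_self_eq_of_comp_smul {E : Type*} [NormedAddCommGroup E]
    [NormedSpace ℝ E] {f : E → ℝ} {f' : E →L[ℝ] ℝ} {x : E} {g : ℝ → ℝ} {g' : ℝ}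
    (hf : HasFDerivAt f f' x) (hg : HasDerivAt g g' 1) (hfg : ∀ t > 0, f (t • x) = g t) :
    f' x = g' := by
  have hray : HasDerivAt (fun t : ℝ => f (t • x)) (f' x) 1 := by
    have hs : HasDerivAt (fun t : ℝ => t • x) x 1 := by
      simpa using (hasDerivAt_id (1 : ℝ)).smul_const x
    exact (one_smul ℝ x ▸ hf).comp_hasDerivAt 1 hs
  refine hray.unique (hg.congr_of_eventuallyEq ?_)
  filter_upwards [Ioi_mem_nhds one_pos] with t ht
  exact hfg t ht

section

variable {p : ℕ} {X : EuclideanSpace ℝ (Fin p)}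

theorem gap_pos_of_strictMono (hX : StrictMono fun i => X i) (i : Fin p)
    (h : (i : ℕ) + 1 < p) : 0 < X ⟨(i : ℕ) + 1, h⟩ - X i :=
  sub_pos.mpr (hX (Fin.mk_lt_mk.mpr (Nat.lt_succ_self i)))

theorem gapSum_pos (m : ℝ) (hp : 2 ≤ p) (hX : StrictMono fun i => X i) :
    0 < gapSum m p X := by
  have h01 : (0 : ℕ) + 1 < p := by omega
  refine Finset.sum_pos' (fun i _ => ?_) ⟨⟨0, by omega⟩, Finset.mem_univ _, ?_⟩
  · split_ifs with h
    exacts [(Real.rpow_pos_of_pos (gap_pos_of_strictMono hX i h) _).le, le_rfl]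
  · rw [dif_pos h01]
    exact Real.rpow_pos_of_pos (gap_pos_of_strictMono hX _ h01) _

theorem gapSum_smul (m : ℝ) (hX : Monotone fun i => X i) {t : ℝ} (ht : 0 ≤ t) :
    gapSum m p (t • X) = t ^ (1 - m) * gapSum m p X := by
  rw [gapSum, gapSum, Finset.mul_sum]
  refine Finset.sum_congr rfl fun i _ => ?_
  split_ifs with h
  · have hgap : 0 ≤ X ⟨(i : ℕ) + 1, h⟩ - X i :=
      sub_nonneg.mpr (hX (Fin.mk_le_mk.mpr (Nat.le_succ i)))
    simp only [PiLp.smul_apply, smul_eq_mul]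
    rw [← mul_sub, Real.mul_rpow ht hgap]
  · rw [mul_zero]

theorem pairSum_smul (m : ℝ) {t : ℝ} (ht : 0 ≤ t) :
    pairSum m p (t • X) = t ^ (1 - m) * pairSum m p X := by
  simp only [pairSum, Finset.mul_sum]
  refine Finset.sum_congr rfl fun i _ => Finset.sum_congr rfl fun j _ => ?_
  split_ifs
  · simp only [PiLp.smul_apply, smul_eq_mul]
    rw [← mul_sub, abs_mul, abs_of_nonneg ht, Real.mul_rpow ht (abs_nonneg _)]
  · rw [mul_zero]

theorem FFa_smul (m χ α : ℝ) (hX : Monotone fun i => X i) {t : ℝ} (ht : 0 ≤ t) :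
    FFa m χ α p (t • X) = t ^ (1 - m) * FF m χ p X + t ^ 2 * (α / 2 * ‖X‖ ^ 2) := by
  rw [FFa, FF, FF, gapSum_smul m hX ht, pairSum_smul m ht, norm_smul, Real.norm_of_nonneg ht]
  ring

theorem differentiableAt_gapSum (m : ℝ) (hX : StrictMono fun i => X i) :
    DifferentiableAt ℝ (gapSum m p) X := by
  refine DifferentiableAt.fun_sum fun i _ => ?_
  split_ifs with h
  · exact (((EuclideanSpace.proj _).differentiableAt).sub
      (EuclideanSpace.proj i).differentiableAt).rpow_const
        (Or.inl (gap_pos_of_strictMono hX i h).ne')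
  · exact differentiableAt_const 0

theorem differentiableAt_pairSum (m : ℝ) (hX : Function.Injective fun i => X i) :
    DifferentiableAt ℝ (pairSum m p) X := by
  refine DifferentiableAt.fun_sum fun i _ => DifferentiableAt.fun_sum fun j _ => ?_
  split_ifs with h
  · have hne : X i - X j ≠ 0 := sub_ne_zero.mpr (hX.ne h)
    exact ((((EuclideanSpace.proj i).differentiableAt).sub
      (EuclideanSpace.proj j).differentiableAt).abs hne).rpow_const
        (Or.inl (abs_ne_zero.mpr hne))
  · exact differentiableAt_const 0

theorem differentiableAt_FFa (m χ α : ℝ) (hX : StrictMono fun i => X i) :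
    DifferentiableAt ℝ (FFa m χ α p) X :=
  (((differentiableAt_gapSum m hX).const_mul _).sub
    ((differentiableAt_pairSum m hX.injective).const_mul _)).add
    (((contDiff_norm_sq ℝ (n := 1)).differentiable one_ne_zero).differentiableAt.const_mul _)

theorem mul_pairSum_lt_gapSum_of_lt_Cp {m χ : ℝ} (hχ : 0 ≤ χ) (hlt : χ < Cp m p)
    (hX : memR p X) (hG : 0 < gapSum m p X) : χ * pairSum m p X < gapSum m p X := by
  set S := {r : ℝ | ∃ Y : EuclideanSpace ℝ (Fin p), memR p Y ∧
    r = pairSum m p Y / gapSum m p Y}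
  have hS : 0 < sSup S := by
    by_contra! h
    exact (hχ.trans_lt hlt).not_ge (inv_nonpos.mpr h)
  have hbdd : BddAbove S := by
    by_contra h
    exact hS.ne' (Real.sSup_of_not_bddAbove h)
  have hratio : pairSum m p X ≤ sSup S * gapSum m p X :=
    (div_le_iff₀ hG).mp (le_csSup hbdd ⟨X, hX, rfl⟩)
  have hχS : χ * sSup S < 1 := (lt_inv_mul_iff₀' hS).mp (by rwa [mul_one])
  calc χ * pairSum m p X ≤ χ * sSup S * gapSum m p X := by
        rw [mul_assoc]; exact mul_le_mul_of_nonneg_left hratio hχ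
    _ < gapSum m p X := mul_lt_of_lt_one_left hG hχS

theorem FF_pos_of_lt_Cp {m χ : ℝ} (hm : 1 < m) (hχ : 0 ≤ χ) (hp : 2 ≤ p) (hlt : χ < Cp m p)
    (hX : memR p X) : 0 < FF m χ p X := by
  have hG := gapSum_pos m hp hX.1
  have hkey := mul_pairSum_lt_gapSum_of_lt_Cp hχ hlt hX hG
  have hFF : FF m χ p X = (gapSum m p X - χ * pairSum m p X) / (m - 1) := by
    rw [FF]; ring
  rw [hFF]
  exact div_pos (sub_pos.mpr hkey) (sub_pos.mpr hm)

end

theorem stmt4 (m χ : ℝ) (hm : 1 < m) (hχ : 0 < χ) (p : ℕ) (hp : 2 ≤ p)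
    (α : ℝ) (hα : α ≤ 0) (hlt : χ < Cp m p) :
    ¬ ∃ V : EuclideanSpace ℝ (Fin p), memR p V ∧ gradient (FFa m χ α p) V = 0 := by
  rintro ⟨V, hV, hgrad⟩
  have hFF := FF_pos_of_lt_Cp hm hχ.le hp hlt hV
  have hD := (differentiableAt_FFa m χ α hV.1).hasFDerivAt
  rw [← toDual_gradient, hgrad, map_zero] at hD
  have hray : HasDerivAt (fun t : ℝ => t ^ (1 - m) * FF m χ p V + t ^ 2 * (α / 2 * ‖V‖ ^ 2))
      ((1 - m) * FF m χ p V + 2 * (α / 2 * ‖V‖ ^ 2)) 1 := by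
    have h1 := Real.hasDerivAt_rpow_const (x := 1) (p := 1 - m) (Or.inl one_ne_zero)
    have h2 := hasDerivAt_pow 2 (1 : ℝ)
    simp only [Real.one_rpow, mul_one, one_pow] at h1 h2
    exact (h1.mul_const _).add (h2.mul_const _)
  have hEuler := hD.apply_self_eq_of_comp_smul hray
    fun t ht => FFa_smul m χ α hV.1.monotone ht.le
  rw [zero_apply] at hEuler
  have hdecay : (1 - m) * FF m χ p V < 0 := mul_neg_of_neg_of_pos (sub_neg.mpr hm) hFF
  have hconfine : α * ‖V‖ ^ 2 ≤ 0 := mul_nonpos_of_nonpos_of_nonneg hα (sq_nonneg _)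
  linarith
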